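/- Let K be a finite set of clues on an n×m Slant board (on pairwise distinct vertices), and let D be the set of all cells having some clued vertex as a corner. Then the board has a valid solution if and only if there exists a partial assignment p on D whose diagonal graph G(p) is acyclic and in which every clued vertex v has degree in G(p) equal to its clue value. -/
import Mathlib


/-!
Slant boards.

An `n×m` Slant board has cells indexed by `Fin n × Fin m` and vertices indexed by
`Fin (n+1) × Fin (m+1)`.  The four corners of cell `(i,j)` are the vertices
`(i,j)`, `(i+1,j)`, `(i,j+1)`, `(i+1,j+1)`.  A full assignment is a function from
cells to `Bool`: `true` means the cell contains the diagonal joining its two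
corners with even coordinate sums, `false` the other diagonal.
-/

namespace Slant

abbrev Cell (n m : ℕ) := Fin n × Fin m
abbrev Vertex (n m : ℕ) := Fin (n + 1) × Fin (m + 1)

variable {n m : ℕ}

def corner00 (c : Cell n m) : Vertex n m := (c.1.castSucc, c.2.castSucc)
def corner10 (c : Cell n m) : Vertex n m := (c.1.succ, c.2.castSucc)
def corner01 (c : Cell n m) : Vertex n m := (c.1.castSucc, c.2.succ)
def corner11 (c : Cell n m) : Vertex n m := (c.1.succ, c.2.succ)

/-- The endpoints of the diagonal of cell `c` joining the two corners whose
coordinate sums are even. -/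
def evenDiag (c : Cell n m) : Vertex n m × Vertex n m :=
  if (c.1.val + c.2.val) % 2 = 0 then (corner00 c, corner11 c) else (corner10 c, corner01 c)

/-- The endpoints of the diagonal of cell `c` joining the two corners whose
coordinate sums are odd. -/
def oddDiag (c : Cell n m) : Vertex n m × Vertex n m :=
  if (c.1.val + c.2.val) % 2 = 0 then (corner10 c, corner01 c) else (corner00 c, corner11 c)

/-- The endpoints of the diagonal chosen in cell `c` by the assignment value `b`. -/
def diagEnds (c : Cell n m) (b : Bool) : Vertex n m × Vertex n m :=
  if b then evenDiag c else oddDiag c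

/-- The diagonal graph of the (partial) assignment `p`, using only the cells in `D`:
two vertices are adjacent iff the chosen diagonal of some cell in `D` joins them.
For a full assignment take `D = Set.univ`. -/
def DiagGraph (D : Set (Cell n m)) (p : Cell n m → Bool) : SimpleGraph (Vertex n m) :=
  SimpleGraph.fromRel (fun u v => ∃ c ∈ D, diagEnds c (p c) = (u, v))

/-- `v` is one of the four corners of cell `c`. -/
def isCorner (v : Vertex n m) (c : Cell n m) : Prop :=
  v = corner00 c ∨ v = corner10 c ∨ v = corner01 c ∨ v = corner11 c

/-- The chosen diagonal of cell `c` under assignment `f` passes through vertex `v`. -/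
def passesThrough (f : Cell n m → Bool) (c : Cell n m) (v : Vertex n m) : Prop :=
  (diagEnds c (f c)).1 = v ∨ (diagEnds c (f c)).2 = v

/-- The degree of a vertex in a graph on the board's vertices. -/
noncomputable def deg (G : SimpleGraph (Vertex n m)) (v : Vertex n m) : ℕ :=
  (G.neighborSet v).ncard

lemma adj_iff {E : Set (Cell n m)} {p : Cell n m → Bool} {u v : Vertex n m} :
    (DiagGraph E p).Adj u v ↔
      u ≠ v ∧ ∃ c ∈ E, diagEnds c (p c) = (u, v) ∨ diagEnds c (p c) = (v, u) := by
  rw [DiagGraph, SimpleGraph.fromRel_adj]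
  constructor
  · rintro ⟨hne, (⟨c, hc, hd⟩ | ⟨c, hc, hd⟩)⟩
    exacts [⟨hne, c, hc, Or.inl hd⟩, ⟨hne, c, hc, Or.inr hd⟩]
  · rintro ⟨hne, c, hc, (hd | hd)⟩
    exacts [⟨hne, Or.inl ⟨c, hc, hd⟩⟩, ⟨hne, Or.inr ⟨c, hc, hd⟩⟩]

def par (v : Vertex n m) : ℕ := (v.1.val + v.2.val) % 2

lemma par_even (c : Cell n m) : par (evenDiag c).1 = 0 ∧ par (evenDiag c).2 = 0 := by
  unfold evenDiag par corner00 corner11 corner10 corner01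
  split <;> simp_all <;> omega

lemma par_odd (c : Cell n m) : par (oddDiag c).1 = 1 ∧ par (oddDiag c).2 = 1 := by
  unfold oddDiag par corner00 corner11 corner10 corner01
  split <;> simp_all <;> omega

lemma diagEnds_cases (c : Cell n m) (b : Bool) :
    diagEnds c b = evenDiag c ∨ diagEnds c b = oddDiag c := by
  cases b <;> simp [diagEnds]

lemma even_ne_odd (c : Cell n m) : evenDiag c ≠ oddDiag c := by
  unfold evenDiag oddDiag
  split <;> intro h <;>
    · have := congrArg (fun q => (Prod.fst (Prod.fst q)).val) h
      simp [corner00, corner10] at this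

lemma even_fst_ne_snd (c : Cell n m) : (evenDiag c).1 ≠ (evenDiag c).2 := by
  unfold evenDiag
  split <;> intro hEq <;>
    simp [corner00, corner11, corner10, corner01, Prod.ext_iff, Fin.ext_iff] at hEq <;> omega

lemma odd_fst_ne_snd (c : Cell n m) : (oddDiag c).1 ≠ (oddDiag c).2 := by
  unfold oddDiag
  split <;> intro hEq <;>
    simp [corner00, corner11, corner10, corner01, Prod.ext_iff, Fin.ext_iff] at hEq <;> omega

lemma diag_ne (c : Cell n m) (b : Bool) : (diagEnds c b).1 ≠ (diagEnds c b).2 := by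
  rcases diagEnds_cases c b with h | h <;> rw [h]
  exacts [even_fst_ne_snd c, odd_fst_ne_snd c]

lemma even_corner (c : Cell n m) : isCorner (evenDiag c).1 c ∧ isCorner (evenDiag c).2 c := by
  unfold evenDiag; split <;> simp [isCorner]

lemma odd_corner (c : Cell n m) : isCorner (oddDiag c).1 c ∧ isCorner (oddDiag c).2 c := by
  unfold oddDiag; split <;> simp [isCorner]

lemma ends_corner (c : Cell n m) (b : Bool) :
    isCorner (diagEnds c b).1 c ∧ isCorner (diagEnds c b).2 c := by
  rcases diagEnds_cases c b with h | h <;> rw [h]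
  exacts [even_corner c, odd_corner c]

lemma adj_par {E : Set (Cell n m)} {p : Cell n m → Bool} {u v : Vertex n m}
    (h : (DiagGraph E p).Adj u v) : par u = par v := by
  obtain ⟨-, c, -, (hd | hd)⟩ := adj_iff.1 h <;>
    rcases diagEnds_cases c (p c) with h' | h' <;> rw [h'] at hd
  · have h1 : u = (evenDiag c).1 := by rw [hd]
    have h2 : v = (evenDiag c).2 := by rw [hd]
    rw [h1, h2, (par_even c).1, (par_even c).2]
  · have h1 : u = (oddDiag c).1 := by rw [hd]
    have h2 : v = (oddDiag c).2 := by rw [hd]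
    rw [h1, h2, (par_odd c).1, (par_odd c).2]
  · have h1 : v = (evenDiag c).1 := by rw [hd]
    have h2 : u = (evenDiag c).2 := by rw [hd]
    rw [h1, h2, (par_even c).1, (par_even c).2]
  · have h1 : v = (oddDiag c).1 := by rw [hd]
    have h2 : u = (oddDiag c).2 := by rw [hd]
    rw [h1, h2, (par_odd c).1, (par_odd c).2]

lemma chosen_even {p : Cell n m → Bool} {u v : Vertex n m} {c : Cell n m}
    (hd : diagEnds c (p c) = (u, v) ∨ diagEnds c (p c) = (v, u)) (hu : par u = 0) :
    evenDiag c = (u, v) ∨ evenDiag c = (v, u) := by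
  rcases diagEnds_cases c (p c) with h' | h'
  · rwa [h'] at hd
  · exfalso
    rcases hd with hd | hd <;> rw [h'] at hd
    · have := (par_odd c).1; rw [hd] at this; simp at this; omega
    · have := (par_odd c).2; rw [hd] at this; simp at this; omega

lemma chosen_odd {p : Cell n m → Bool} {u v : Vertex n m} {c : Cell n m}
    (hd : diagEnds c (p c) = (u, v) ∨ diagEnds c (p c) = (v, u)) (hu : par u = 1) :
    oddDiag c = (u, v) ∨ oddDiag c = (v, u) := by
  rcases diagEnds_cases c (p c) with h' | h'
  · exfalso
    rcases hd with hd | hd <;> rw [h'] at hd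
    · have := (par_even c).1; rw [hd] at this; simp at this; omega
    · have := (par_even c).2; rw [hd] at this; simp at this; omega
  · rwa [h'] at hd

def hh (u w : Vertex n m) : ZMod 2 := if u.1.val < w.1.val ∧ u.2.val < w.2.val then 1 else 0
def Xo (u : Vertex n m) (d : Cell n m) : ZMod 2 := if d.2.val = u.2.val ∧ u.1.val ≤ d.1.val then 1 else 0
def Xe (w : Vertex n m) (c : Cell n m) : ZMod 2 := if w.1.val = c.1.val + 1 ∧ c.2.val < w.2.val then 1 else 0

set_option maxHeartbeats 2000000 in
lemma key (d c' : Cell n m) :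
    Xo (oddDiag c').1 d + Xo (oddDiag c').2 d + Xe (evenDiag d).1 c' + Xe (evenDiag d).2 c' +
      hh (oddDiag c').1 (evenDiag d).1 + hh (oddDiag c').1 (evenDiag d).2 +
      hh (oddDiag c').2 (evenDiag d).1 + hh (oddDiag c').2 (evenDiag d).2 =
      if d = c' then 1 else 0 := by
  by_cases h1 : (d.1.val + d.2.val) % 2 = 0 <;> by_cases h2 : (c'.1.val + c'.2.val) % 2 = 0 <;>
    simp only [oddDiag, evenDiag, h1, h2, if_true, if_false, corner00, corner01, corner10,
      corner11, hh, Xo, Xe, Fin.coe_castSucc, Fin.val_succ, Prod.ext_iff, Fin.ext_iff,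
      if_pos, if_neg, ite_true, ite_false] <;>
    split_ifs <;> first | rfl | omega

variable {E : Set (Cell n m)} {p : Cell n m → Bool}

lemma exists_cell {u v : Vertex n m} (h : (DiagGraph E p).Adj u v) :
    ∃ c, c ∈ E ∧ (diagEnds c (p c) = (u, v) ∨ diagEnds c (p c) = (v, u)) := by
  obtain ⟨-, c, hc, hd⟩ := adj_iff.1 h
  exact ⟨c, hc, hd⟩

noncomputable def cellOf {u v : Vertex n m} (h : (DiagGraph E p).Adj u v) : Cell n m :=
  (exists_cell h).choose

lemma cellOf_spec {u v : Vertex n m} (h : (DiagGraph E p).Adj u v) :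
    cellOf h ∈ E ∧ (diagEnds (cellOf h) (p (cellOf h)) = (u, v) ∨
      diagEnds (cellOf h) (p (cellOf h)) = (v, u)) :=
  (exists_cell h).choose_spec

noncomputable def wsum : ∀ {a b : Vertex n m}, (DiagGraph E p).Walk a b → Vertex n m → ZMod 2
  | _, _, SimpleGraph.Walk.nil, _ => 0
  | _, _, SimpleGraph.Walk.cons h W, u => Xo u (cellOf h) + wsum W u

lemma L1 (c' : Cell n m) {u u' : Vertex n m}
    (hp : oddDiag c' = (u, u') ∨ oddDiag c' = (u', u))
    (hc' : c' ∉ E ∨ diagEnds c' (p c') = oddDiag c') :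
    ∀ {a b : Vertex n m} (W : (DiagGraph E p).Walk a b), par a = 0 →
      wsum W u + wsum W u' =
        (hh u a + hh u' a + Xe a c') + (hh u b + hh u' b + Xe b c') := by
  intro a b W
  induction W with
  | nil =>
    intro _
    simp only [wsum]
    rw [add_zero, CharTwo.add_self_eq_zero]
  | @cons x y z hxy W ih =>
    intro hx
    have hy : par y = 0 := by rw [← adj_par hxy]; exact hx
    have hd := cellOf_spec hxy
    set d := cellOf hxy with hdd
    have hev : evenDiag d = (x, y) ∨ evenDiag d = (y, x) := chosen_even hd.2 hx
    have hdc : d ≠ c' := by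
      rintro rfl
      rcases hc' with hnE | hodd
      · exact hnE hd.1
      · rcases hd.2 with h2 | h2 <;> rw [hodd] at h2
        · have := (par_odd d).1; rw [h2] at this; simp [par] at this; simp [par] at hx; omega
        · have := (par_odd d).2; rw [h2] at this; simp [par] at this; simp [par] at hx; omega
    have k := key d c'
    rw [if_neg hdc] at k
    have h2 : (Xe x c' + hh u x + hh u' x) + (Xe x c' + hh u x + hh u' x) = 0 :=
      CharTwo.add_self_eq_zero _
    simp only [wsum]
    rcases hp with hp | hp <;> rcases hev with he | he <;> rw [hp, he] at k <;> dsimp only at k <;>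
      linear_combination k + ih hy - h2

lemma no_both (c : Cell n m) (hc : c ∉ E) :
    ¬((DiagGraph E p).Reachable (evenDiag c).1 (evenDiag c).2 ∧
      (DiagGraph E p).Reachable (oddDiag c).1 (oddDiag c).2) := by
  rintro ⟨⟨W1⟩, ⟨W2⟩⟩
  have hpar0 : par (evenDiag c).1 = 0 := (par_even c).1
  have main : ∀ {a b : Vertex n m} (W2 : (DiagGraph E p).Walk a b), par a = 1 →
      wsum W1 a + Xo a c = wsum W1 b + Xo b c := by
    intro a b W2
    induction W2 with
    | nil => intro _; rfl
    | @cons x y z hxy W ih =>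
      intro hx
      have hy : par y = 1 := by rw [← adj_par hxy]; exact hx
      have hd := cellOf_spec hxy
      set d := cellOf hxy with hdd
      have hod : oddDiag d = (x, y) ∨ oddDiag d = (y, x) := chosen_odd hd.2 hx
      have hchos : diagEnds d (p d) = oddDiag d := by
        rcases diagEnds_cases d (p d) with h' | h'
        · exfalso
          rcases hd.2 with h2 | h2 <;> rw [h'] at h2
          · have := (par_even d).1; rw [h2] at this; simp [par] at this; simp [par] at hx; omega
          · have := (par_even d).2; rw [h2] at this; simp [par] at this; simp [par] at hx; omega
        · exact h'
      have hL := L1 d hod (Or.inr hchos) W1 hpar0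
      have k := key c d
      have hcd : c ≠ d := fun h => hc (h ▸ hd.1)
      rw [if_neg hcd] at k
      have hself : (Xo y c + wsum W1 y) + (Xo y c + wsum W1 y) = 0 := CharTwo.add_self_eq_zero _
      refine Eq.trans ?_ (ih hy)
      rcases hod with ho | ho <;> rw [ho] at k <;> dsimp only at k <;>
        linear_combination k + hL - hself
  have hth := main W2 ((par_odd c).1)
  have hL := L1 c (Or.inl Prod.mk.eta.symm) (Or.inl hc) W1 hpar0
  have k := key c c
  rw [if_pos rfl] at k
  have hself : (Xo (oddDiag c).1 c + wsum W1 (oddDiag c).1) +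
      (Xo (oddDiag c).1 c + wsum W1 (oddDiag c).1) = 0 := CharTwo.add_self_eq_zero _
  have contra : (0 : ZMod 2) = 1 := by linear_combination k + hL + hth - hself
  exact absurd contra (by decide)


lemma acyclic_anti {V : Type*} {G G' : SimpleGraph V} (h : G ≤ G') (hac : G'.IsAcyclic) :
    G.IsAcyclic := fun _ cyc hcyc => hac (cyc.mapLe h) (hcyc.mapLe h)

lemma DiagGraph_mono {D D' : Set (Cell n m)} (h : D ⊆ D') (p : Cell n m → Bool) :
    DiagGraph D p ≤ DiagGraph D' p := by
  intro u v huv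
  obtain ⟨hne, cc, hcc, hd⟩ := adj_iff.1 huv
  exact adj_iff.2 ⟨hne, cc, h hcc, hd⟩

lemma DiagGraph_congr {D : Set (Cell n m)} {p p' : Cell n m → Bool}
    (h : ∀ c ∈ D, p c = p' c) : DiagGraph D p = DiagGraph D p' := by
  ext u v
  rw [adj_iff, adj_iff]
  constructor <;> rintro ⟨hne, cc, hcc, hd⟩
  · exact ⟨hne, cc, hcc, by rwa [← h cc hcc]⟩
  · exact ⟨hne, cc, hcc, by rwa [h cc hcc]⟩

lemma extend : ∀ (k : ℕ) (E : Finset (Cell n m)) (p : Cell n m → Bool), Eᶜ.card = k →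
    (DiagGraph ↑E p).IsAcyclic →
    ∃ f, (∀ c ∈ E, f c = p c) ∧ (DiagGraph Set.univ f).IsAcyclic := by
  intro k
  induction k with
  | zero =>
    intro E p hE hac
    have hEu : E = Finset.univ := (Finset.compl_eq_empty_iff E).1 (Finset.card_eq_zero.1 hE)
    subst hEu
    exact ⟨p, fun c _ => rfl, by simpa using hac⟩
  | succ k ih =>
    intro E p hE hac
    obtain ⟨c, hcmem⟩ : Eᶜ.Nonempty := Finset.card_pos.1 (by omega)
    have hc : c ∉ E := Finset.mem_compl.1 hcmem
    have hcS : c ∉ (↑E : Set (Cell n m)) := by simpa using hc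
    classical
    have hb : ∃ b : Bool,
        ¬(DiagGraph ↑E p).Reachable (diagEnds c b).1 (diagEnds c b).2 := by
      by_cases hreach : (DiagGraph ↑E p).Reachable (evenDiag c).1 (evenDiag c).2
      · refine ⟨false, ?_⟩
        have := no_both (E := ↑E) (p := p) c hcS
        simp only [diagEnds, if_neg Bool.false_ne_true, Bool.false_eq_true, ite_false]
        exact fun hr => this ⟨hreach, hr⟩
      · exact ⟨true, by simpa [diagEnds] using hreach⟩
    obtain ⟨b, hnr⟩ := hb
    set p' := Function.update p c b with hp'
    have hpeq : ∀ d ∈ (↑E : Set (Cell n m)), p d = p' d := by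
      intro d hd
      have : d ≠ c := fun h => hcS (h ▸ hd)
      simp [hp', Function.update_of_ne this]
    have hEp' : DiagGraph ↑E p' = DiagGraph ↑E p := (DiagGraph_congr hpeq).symm
    have hpc : p' c = b := Function.update_self c b p
    set x := (diagEnds c b).1 with hx
    set y := (diagEnds c b).2 with hy
    have hxyne : x ≠ y := diag_ne c b
    have hadj' : ∀ u v : Vertex n m, (DiagGraph ↑(insert c E) p').Adj u v ↔
        (DiagGraph ↑E p).Adj u v ∨
          (u ≠ v ∧ (diagEnds c b = (u, v) ∨ diagEnds c b = (v, u))) := by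
      intro u v
      rw [adj_iff, ← hEp', adj_iff]
      simp only [Finset.coe_insert, Set.mem_insert_iff]
      constructor
      · rintro ⟨hne, d, (rfl | hd), hdg⟩
        · exact Or.inr ⟨hne, by rwa [hpc] at hdg⟩
        · exact Or.inl ⟨hne, d, hd, hdg⟩
      · rintro (⟨hne, d, hd, hdg⟩ | ⟨hne, hdg⟩)
        · exact ⟨hne, d, Or.inr hd, hdg⟩
        · exact ⟨hne, c, Or.inl rfl, by rwa [hpc]⟩
    have hG'ac : (DiagGraph ↑(insert c E) p').IsAcyclic := by
      intro v cyc hcyc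
      by_cases hmem : s(x, y) ∈ cyc.edges
      · have hrd := (SimpleGraph.adj_and_reachable_delete_edges_iff_exists_cycle.2
          ⟨v, cyc, hcyc, hmem⟩).2
        have hle : (DiagGraph ↑(insert c E) p' \ SimpleGraph.fromEdgeSet {s(x, y)}) ≤
            DiagGraph ↑E p := by
          intro u w huw
          rw [SimpleGraph.sdiff_adj, SimpleGraph.fromEdgeSet_adj] at huw
          obtain ⟨h1, h2⟩ := huw
          rcases (hadj' u w).1 h1 with h3 | ⟨hne, h3⟩
          · exact h3
          · exfalso
            apply h2
            refine ⟨?_, hne⟩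
            have h4 : s(u, w) = s(x, y) := by
              rw [hx, hy]
              rcases h3 with h3 | h3 <;> rw [h3]
              exact Sym2.eq_swap
            rw [h4]
            exact Set.mem_singleton _
        exact hnr (hrd.mono hle)
      · have hsub : ∀ e ∈ cyc.edges, e ∈ (DiagGraph ↑E p).edgeSet := by
          intro e he
          induction e with
          | h u w =>
            have hadj := cyc.adj_of_mem_edges he
            rw [SimpleGraph.mem_edgeSet]
            rcases (hadj' u w).1 hadj with h3 | ⟨hne, h3⟩
            · exact h3
            · exfalso
              apply hmem
              have h4 : s(u, w) = s(x, y) := by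
                rw [hx, hy]
                rcases h3 with h3 | h3 <;> rw [h3]
                exact Sym2.eq_swap
              rwa [← h4]
        exact hac (cyc.transfer _ hsub) (hcyc.transfer hsub)
    have hcard : (insert c E)ᶜ.card = k := by
      have h1 : (insert c E).card = E.card + 1 := Finset.card_insert_of_notMem hc
      have h2 := Finset.card_compl (insert c E)
      have h3 := Finset.card_compl E
      have h4 : E.card ≤ Fintype.card (Cell n m) := Finset.card_le_univ E
      have h5 : (insert c E).card ≤ Fintype.card (Cell n m) := Finset.card_le_univ _
      omega
    obtain ⟨f, hf, hfac⟩ := ih (insert c E) p' hcard hG'ac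
    refine ⟨f, fun d hd => ?_, hfac⟩
    rw [hf d (Finset.mem_insert_of_mem hd)]
    exact (hpeq d (by simpa using hd)).symm

lemma nbhd_eq {D : Set (Cell n m)} {f : Cell n m → Bool} (v : Vertex n m)
    (hv : ∀ c : Cell n m, isCorner v c → c ∈ D) :
    (DiagGraph Set.univ f).neighborSet v = (DiagGraph D f).neighborSet v := by
  ext u
  simp only [SimpleGraph.mem_neighborSet]
  constructor
  · intro h
    obtain ⟨hne, cc, -, hd⟩ := adj_iff.1 h
    have hcD : cc ∈ D := by
      rcases hd with hd | hd
      · have := (ends_corner cc (f cc)).1; rw [hd] at this; exact hv cc this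
      · have := (ends_corner cc (f cc)).2; rw [hd] at this; exact hv cc this
    exact adj_iff.2 ⟨hne, cc, hcD, hd⟩
  · intro h
    exact DiagGraph_mono (Set.subset_univ D) f h


/-- For a finite clue set `K` on pairwise distinct vertices, with clue
values in `{0,…,4}`, and `D` the set of cells incident to a clued vertex: the board has
a valid solution iff some partial assignment on `D` has an acyclic diagonal graph in
which every clued vertex has degree equal to its clue value. -/
theorem solvable_iff_partial (n m : ℕ) (K : Finset (Vertex n m × ℕ))
    (hK4 : ∀ q ∈ K, q.2 ≤ 4)
    (hKdist : ∀ q ∈ K, ∀ q' ∈ K, q.1 = q'.1 → q = q') :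
    (∃ f : Cell n m → Bool,
        (DiagGraph (Set.univ : Set (Cell n m)) f).IsAcyclic ∧
        ∀ q ∈ K, deg (DiagGraph (Set.univ : Set (Cell n m)) f) q.1 = q.2) ↔
    (∃ p : Cell n m → Bool,
        (DiagGraph {c : Cell n m | ∃ q ∈ K, isCorner q.1 c} p).IsAcyclic ∧
        ∀ q ∈ K, deg (DiagGraph {c : Cell n m | ∃ q ∈ K, isCorner q.1 c} p) q.1 = q.2) := by
  set D : Set (Cell n m) := {c : Cell n m | ∃ q ∈ K, isCorner q.1 c} with hD
  constructor
  · rintro ⟨f, hac, hdeg⟩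
    refine ⟨f, acyclic_anti (DiagGraph_mono (Set.subset_univ D) f) hac, ?_⟩
    intro q hq
    have hv : ∀ c, isCorner q.1 c → c ∈ D := fun c hcor => ⟨q, hq, hcor⟩
    rw [deg, ← nbhd_eq q.1 hv]
    exact hdeg q hq
  · rintro ⟨p, hac, hdeg⟩
    classical
    have hfin : D.Finite := Set.toFinite D
    have hco : ↑hfin.toFinset = D := Set.Finite.coe_toFinset hfin
    obtain ⟨f, hf, hfac⟩ :=
      extend (hfin.toFinset)ᶜ.card hfin.toFinset p rfl (by rwa [hco])
    refine ⟨f, hfac, ?_⟩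
    intro q hq
    have hv : ∀ c, isCorner q.1 c → c ∈ D := fun c hcor => ⟨q, hq, hcor⟩
    have hfp : ∀ c ∈ D, p c = f c := fun c hcD =>
      (hf c ((Set.Finite.mem_toFinset hfin).2 hcD)).symm
    rw [deg, nbhd_eq q.1 hv, ← DiagGraph_congr hfp]
    exact hdeg q hq

end Slant
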